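/- In the trivial bundle π : ℝ² → ℝ (base coordinate x) with connection Φ = (dx - dy) ⊗ ∂/∂y, the horizontal lift through (0,0) of the base curve x(t) = t is t ↦ (t, t). Consequently, for the structure with R^A = {(x,y) : y ≠ 0} and the section s(x) = (x, 0): A ⊩₀ ¬R(s) (s avoids R^A on all of ℝ), but A^Φ ⊮_{(0,0)} ¬R(x), since along the path σ(t) = t the horizontal lift (t, t) lies in R^A for all t ≠ 0, so {t : (t,t) ∉ R^A} = {0} is not open. -/

import Mathlib

/-- `R^A = {(x,y) : y ≠ 0}` in the trivial bundle `π : ℝ² → ℝ`, `π(x,y) = x`. -/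
def RA : Set (ℝ × ℝ) := {p | p.2 ≠ 0}

/-! The fiber coordinate of the horizontal lift and the identity both solve `y' = 1`, `y(0) = 0`;
their difference has zero derivative, so the lift is the diagonal. Forcing of `¬R` then fails at
the origin because `ℝ` has no isolated points. -/

theorem eq_of_forall_hasDerivAt_of_eq {𝕜 G : Type*} [RCLike 𝕜] [NormedAddCommGroup G]
    [NormedSpace 𝕜 G] {f g f' : 𝕜 → G} (hf : ∀ x, HasDerivAt f (f' x) x)
    (hg : ∀ x, HasDerivAt g (f' x) x) (x₀ : 𝕜) (h₀ : f x₀ = g x₀) : f = g := by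
  have hderiv : ∀ x, HasDerivAt (f - g) 0 x := fun x => by
    simpa only [sub_self] using (hf x).sub (hg x)
  funext x
  have hconst : (f - g) x = (f - g) x₀ :=
    is_const_of_deriv_eq_zero (fun x => (hderiv x).differentiableAt) (fun x => (hderiv x).deriv)
      x x₀
  rwa [Pi.sub_apply, Pi.sub_apply, h₀, sub_self, sub_eq_zero] at hconst

/-- in the trivial bundle with connection `Φ = (dx - dy) ⊗ ∂/∂y`:
(1) the horizontal lift through `(0,0)` of the base curve `x(t) = t` (whose fiber
component solves `y' = 1`, `y(0) = 0`) is `t ↦ (t,t)`;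
(2) the section `s(x) = (x,0)` avoids `R^A` everywhere, so `A ⊩₀ ¬R(s)`;
(3) nevertheless parallel forcing fails: `{t : (t,t) ∉ R^A} = {0}` is not open, so
`A^Φ ⊮_{(0,0)} ¬R(x)`. -/
theorem pointwise_forcing_differs_from_parallel_forcing :
    (∀ y : ℝ → ℝ, (∀ t, HasDerivAt y 1 t) → y 0 = 0 → ∀ t, y t = t) ∧
    (∀ u : ℝ, ((u, 0) : ℝ × ℝ) ∉ RA) ∧
    ({t : ℝ | ((t, t) : ℝ × ℝ) ∉ RA} = {0} ∧ ¬ IsOpen ({0} : Set ℝ)) := by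
  refine ⟨fun y hy hy₀ => congrFun (eq_of_forall_hasDerivAt_of_eq hy hasDerivAt_id 0 hy₀),
    fun u hu => hu rfl, ?_, not_isOpen_singleton 0⟩
  ext t
  simp [RA]
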